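/- arXiv:1311.4048 — 6 statements merged into one kernel-verified Lean document; each statement's English description precedes it below -/
import Mathlib

section
/- Let P₁, P₂ be groups, G an abelian group, and φ : P₁ → G, ψ : P₂ → G surjective group homomorphisms. Let F = P₁ × P₂ and let K be the kernel of the homomorphism F → G given by (p,q) ↦ φ(p) − ψ(q). Then the triple commutator subgroup ⁅F, ⁅F, F⁆⁆ is contained in ⁅K, K⁆. -/
/-!
Since `G` is abelian, `⁅F, F⁆ ≤ ker φ × ker ψ`, so `⁅F, ⁅F, F⁆⁆` is generated by the
commutators `⁅(p, q), (a, b)⁆ = (⁅p, a⁆, 1) * (1, ⁅q, b⁆)` with `φ a = 1 = ψ b`.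
By surjectivity of `ψ` there is `q'` with `(p, q') ∈ K`, and `(a, 1) ∈ K`, so
`(⁅p, a⁆, 1) = ⁅(p, q'), (a, 1)⁆ ∈ ⁅K, K⁆`; symmetrically for `(1, ⁅q, b⁆)`.
-/

open scoped commutatorElement

theorem Prod.commutatorElement_mk {P₁ P₂ : Type*} [Group P₁] [Group P₂] (p a : P₁) (q b : P₂) :
    ⁅(p, q), (a, b)⁆ = (⁅p, a⁆, ⁅q, b⁆) := rfl

namespace Subgroup

variable {P₁ P₂ : Type*} [Group P₁] [Group P₂] {K : Subgroup (P₁ × P₂)}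

theorem mk_commutatorElement_one_mem_commutator {p a : P₁} {q : P₂} (hp : (p, q) ∈ K)
    (ha : (a, 1) ∈ K) : (⁅p, a⁆, 1) ∈ ⁅K, K⁆ := by
  simpa only [Prod.commutatorElement_mk, commutatorElement_one_right] using
    commutator_mem_commutator hp ha

theorem one_mk_commutatorElement_mem_commutator {p : P₁} {q b : P₂} (hq : (p, q) ∈ K)
    (hb : (1, b) ∈ K) : (1, ⁅q, b⁆) ∈ ⁅K, K⁆ := by
  simpa only [Prod.commutatorElement_mk, commutatorElement_one_right] using
    commutator_mem_commutator hq hb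

theorem commutator_top_prod_le_commutator {H₁ : Subgroup P₁} {H₂ : Subgroup P₂}
    (hfst : ∀ p, ∃ q, (p, q) ∈ K) (hsnd : ∀ q, ∃ p, (p, q) ∈ K) (hH : H₁.prod H₂ ≤ K) :
    ⁅(⊤ : Subgroup (P₁ × P₂)), H₁.prod H₂⁆ ≤ ⁅K, K⁆ := by
  rw [commutator_le]
  rintro ⟨p, q⟩ - ⟨a, b⟩ ⟨ha, hb⟩
  obtain ⟨q', hpq'⟩ := hfst p
  obtain ⟨p', hp'q⟩ := hsnd q
  have hsplit : ⁅(p, q), (a, b)⁆ = (⁅p, a⁆, 1) * (1, ⁅q, b⁆) := by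
    simp only [Prod.commutatorElement_mk, Prod.mk_mul_mk, mul_one, one_mul]
  rw [hsplit]
  exact mul_mem (mk_commutatorElement_one_mem_commutator hpq' (hH ⟨ha, H₂.one_mem⟩))
    (one_mk_commutatorElement_mem_commutator hp'q (hH ⟨H₁.one_mem, hb⟩))

end Subgroup

theorem commutator_le_ker_prod_ker {P₁ P₂ G : Type*} [Group P₁] [Group P₂] [CommGroup G]
    (φ : P₁ →* G) (ψ : P₂ →* G) : commutator (P₁ × P₂) ≤ φ.ker.prod ψ.ker :=
  MonoidHom.ker_prodMap φ ψ ▸ Abelianization.commutator_subset_ker (φ.prodMap ψ)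

/-- With `F = P₁ × P₂` and `K` the kernel of `(p,q) ↦ φ(p) - ψ(q)`,
the triple commutator subgroup `⁅F, ⁅F, F⁆⁆` is contained in `⁅K, K⁆`. -/
theorem triple_commutator_le_commutator_of_kernel
    {P₁ P₂ G : Type*} [Group P₁] [Group P₂] [CommGroup G]
    (φ : P₁ →* G) (ψ : P₂ →* G)
    (hφ : Function.Surjective φ) (hψ : Function.Surjective ψ)
    (K : Subgroup (P₁ × P₂))
    (hK : ∀ p q, (p, q) ∈ K ↔ φ p = ψ q) :
    ⁅(⊤ : Subgroup (P₁ × P₂)), ⁅(⊤ : Subgroup (P₁ × P₂)), (⊤ : Subgroup (P₁ × P₂))⁆⁆ ≤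
      ⁅K, K⁆ := by
  have hfst : ∀ p, ∃ q, (p, q) ∈ K := fun p ↦
    (hψ (φ p)).imp fun q hq ↦ (hK p q).mpr hq.symm
  have hsnd : ∀ q, ∃ p, (p, q) ∈ K := fun q ↦
    (hφ (ψ q)).imp fun p hp ↦ (hK p q).mpr hp
  have hker : φ.ker.prod ψ.ker ≤ K := by
    rintro ⟨a, b⟩ ⟨ha, hb⟩
    exact (hK a b).mpr (ha.trans hb.symm)
  calc ⁅⊤, ⁅⊤, ⊤⁆⁆ ≤ ⁅⊤, φ.ker.prod ψ.ker⁆ :=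
        Subgroup.commutator_mono le_rfl (commutator_le_ker_prod_ker φ ψ)
    _ ≤ ⁅K, K⁆ := Subgroup.commutator_top_prod_le_commutator hfst hsnd hker
end

section
/- Let P₁, P₂ be groups, G an abelian group, and φ : P₁ → G, ψ : P₂ → G surjective group homomorphisms. Let F = P₁ × P₂ and let K be the kernel of the homomorphism F → G given by (p,q) ↦ φ(p) − ψ(q). Then the image of ⁅F, F⁆ in the quotient group F / ⁅K, K⁆ is contained in the center of F / ⁅K, K⁆. -/
/-!
Since `G` is abelian, `⁅F, F⁆ ≤ ker φ × ker ψ`.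
For `a ∈ ker φ` and `(x, y) ∈ F`, surjectivity of `ψ` gives `q` with `(x, q) ∈ K`, and then
`⁅(a, 1), (x, y)⁆ = (⁅a, x⁆, 1) = ⁅(a, 1), (x, q)⁆` is a commutator of two elements of `K`;
symmetrically on the second factor. Hence `⁅⁅F, F⁆, F⁆ ≤ ⁅K, K⁆`.
-/

open scoped commutatorElement

namespace Subgroup

theorem map_mk'_le_center_of_commutator_le {G : Type*} [Group G] {H N : Subgroup G} [N.Normal]
    (h : ⁅H, ⊤⁆ ≤ N) : H.map (QuotientGroup.mk' N) ≤ center (G ⧸ N) := by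
  rw [map_le_iff_le_comap, ← upperCentralSeriesStep_eq_comap_center]
  exact fun x hx y => h (commutator_mem_commutator hx (mem_top y))

section Prod

variable {P₁ P₂ : Type*} [Group P₁] [Group P₂] (K : Subgroup (P₁ × P₂))

theorem commutator_mk_one_mem_commutator {a x : P₁} {q : P₂} (ha : (a, 1) ∈ K)
    (hx : (x, q) ∈ K) : (⁅a, x⁆, (1 : P₂)) ∈ ⁅K, K⁆ := by
  simpa [commutatorElement_def] using commutator_mem_commutator ha hx

theorem commutator_one_mk_mem_commutator {b y : P₂} {p : P₁} (hb : (1, b) ∈ K)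
    (hy : (p, y) ∈ K) : ((1 : P₁), ⁅b, y⁆) ∈ ⁅K, K⁆ := by
  simpa [commutatorElement_def] using commutator_mem_commutator hb hy

theorem commutator_prod_comap_inl_comap_inr_top_le
    (hfst : ∀ x : P₁, ∃ q, (x, q) ∈ K) (hsnd : ∀ y : P₂, ∃ p, (p, y) ∈ K) :
    ⁅(K.comap (MonoidHom.inl P₁ P₂)).prod (K.comap (MonoidHom.inr P₁ P₂)), ⊤⁆ ≤ ⁅K, K⁆ := by
  rw [commutator_le]
  rintro ⟨a, b⟩ ⟨ha, hb⟩ ⟨x, y⟩ -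
  obtain ⟨q, hq⟩ := hfst x
  obtain ⟨p, hp⟩ := hsnd y
  have hsplit : ⁅(a, b), (x, y)⁆ = (⁅a, x⁆, (1 : P₂)) * ((1 : P₁), ⁅b, y⁆) := by
    simp [commutatorElement_def]
  rw [hsplit]
  exact mul_mem (commutator_mk_one_mem_commutator K ha hq)
    (commutator_one_mk_mem_commutator K hb hp)

end Prod

end Subgroup

section FiberProduct

variable {P₁ P₂ G : Type*} [Group P₁] [Group P₂] [CommGroup G] (φ : P₁ →* G) (ψ : P₂ →* G)

theorem mk_mem_ker_fst_div_snd_iff {p : P₁} {q : P₂} :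
    (p, q) ∈ (φ.comp (MonoidHom.fst P₁ P₂) / ψ.comp (MonoidHom.snd P₁ P₂)).ker ↔ φ p = ψ q := by
  simp [div_eq_one]

theorem commutator_top_le_ker_prod_ker :
    ⁅(⊤ : Subgroup (P₁ × P₂)), ⊤⁆ ≤ φ.ker.prod ψ.ker := by
  rw [← Subgroup.top_prod_top, Subgroup.commutator_prod_prod]
  exact Subgroup.prod_mono (Abelianization.commutator_subset_ker φ)
    (Abelianization.commutator_subset_ker ψ)

theorem ker_prod_ker_le_comap_inl_prod_comap_inr :
    φ.ker.prod ψ.ker ≤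
      ((φ.comp (MonoidHom.fst P₁ P₂) / ψ.comp (MonoidHom.snd P₁ P₂)).ker.comap
        (MonoidHom.inl P₁ P₂)).prod
      ((φ.comp (MonoidHom.fst P₁ P₂) / ψ.comp (MonoidHom.snd P₁ P₂)).ker.comap
        (MonoidHom.inr P₁ P₂)) := by
  rintro ⟨a, b⟩ ⟨ha, hb⟩
  constructor
  · simpa [mk_mem_ker_fst_div_snd_iff] using ha
  · simpa [mk_mem_ker_fst_div_snd_iff, eq_comm] using hb

end FiberProduct

/-- With `F = P₁ × P₂` and `K` the kernel of `(p,q) ↦ φ(p) - ψ(q)`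
(here realized as the kernel of the monoid hom `(p,q) ↦ φ(p) * (ψ q)⁻¹`, `G` being
an abelian group), the image of `⁅F, F⁆` in `F / ⁅K, K⁆` is contained in the center. -/
theorem image_commutator_le_center
    {P₁ P₂ G : Type*} [Group P₁] [Group P₂] [CommGroup G]
    (φ : P₁ →* G) (ψ : P₂ →* G)
    (hφ : Function.Surjective φ) (hψ : Function.Surjective ψ) :
    Subgroup.map
      (QuotientGroup.mk' ⁅MonoidHom.ker (φ.comp (MonoidHom.fst P₁ P₂) / ψ.comp (MonoidHom.snd P₁ P₂)),
        MonoidHom.ker (φ.comp (MonoidHom.fst P₁ P₂) / ψ.comp (MonoidHom.snd P₁ P₂))⁆)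
      ⁅(⊤ : Subgroup (P₁ × P₂)), (⊤ : Subgroup (P₁ × P₂))⁆ ≤
    Subgroup.center
      ((P₁ × P₂) ⧸ ⁅MonoidHom.ker (φ.comp (MonoidHom.fst P₁ P₂) / ψ.comp (MonoidHom.snd P₁ P₂)),
        MonoidHom.ker (φ.comp (MonoidHom.fst P₁ P₂) / ψ.comp (MonoidHom.snd P₁ P₂))⁆) := by
  set K := (φ.comp (MonoidHom.fst P₁ P₂) / ψ.comp (MonoidHom.snd P₁ P₂)).ker
  have hfst : ∀ x : P₁, ∃ q, (x, q) ∈ K := fun x =>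
    (hψ (φ x)).imp fun q hq => (mk_mem_ker_fst_div_snd_iff φ ψ).2 hq.symm
  have hsnd : ∀ y : P₂, ∃ p, (p, y) ∈ K := fun y =>
    (hφ (ψ y)).imp fun p hp => (mk_mem_ker_fst_div_snd_iff φ ψ).2 hp
  apply Subgroup.map_mk'_le_center_of_commutator_le
  calc ⁅⁅(⊤ : Subgroup (P₁ × P₂)), ⊤⁆, ⊤⁆
      ≤ ⁅(K.comap (MonoidHom.inl P₁ P₂)).prod (K.comap (MonoidHom.inr P₁ P₂)), ⊤⁆ :=
        Subgroup.commutator_mono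
          ((commutator_top_le_ker_prod_ker φ ψ).trans
            (ker_prod_ker_le_comap_inl_prod_comap_inr φ ψ)) le_rfl
    _ ≤ ⁅K, K⁆ := Subgroup.commutator_prod_comap_inl_comap_inr_top_le K hfst hsnd
end

section
/- Let P₁, P₂ be groups, G an abelian group, and φ : P₁ → G, ψ : P₂ → G surjective group homomorphisms. Let F = P₁ × P₂ and let K be the kernel of the homomorphism F → G given by (p,q) ↦ φ(p) − ψ(q). Then for all x, y, z ∈ F, the element [x·y, z] · ([x,z]·[y,z])⁻¹ belongs to ⁅K, K⁆; that is, the commutator map F × F → ⁅F,F⁆/⁅K,K⁆ is bilinear. -/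
open scoped commutatorElement

/-!
Expanding, `⁅x * y, z⁆ * (⁅x, z⁆ * ⁅y, z⁆)⁻¹ = ⁅x, ⁅y, z⁆⁆ * ⁅⁅y, z⁆, ⁅x, z⁆⁆`. As `G` is abelian,
every commutator of `P₁ × P₂` lies in `K`, which handles the second factor. For the first, `c = ⁅y, z⁆`
lies in `ker φ × ker ψ`, and `⁅v, c⁆ = ⁅v, (c₁, 1)⁆ * ⁅v, (1, c₂)⁆`. In `⁅v, (c₁, 1)⁆` only the first
coordinate of `v` matters, and surjectivity of `ψ` lets us change the second one so that `v ∈ K`;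
likewise for `⁅v, (1, c₂)⁆`.
-/

theorem commutatorElement_mul_left_mul_inv {F : Type*} [Group F] (x y z : F) :
    ⁅x * y, z⁆ * (⁅x, z⁆ * ⁅y, z⁆)⁻¹ = ⁅x, ⁅y, z⁆⁆ * ⁅⁅y, z⁆, ⁅x, z⁆⁆ := by
  simp only [commutatorElement_def]
  group

theorem map_commutatorElement_eq_one {H G : Type*} [Group H] [CommGroup G] (f : H →* G)
    (a b : H) : f ⁅a, b⁆ = 1 := by
  rw [map_commutatorElement, commutatorElement_eq_one_iff_commute]
  exact Commute.all _ _

@[simp]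
theorem Prod.fst_commutatorElement {M N : Type*} [Group M] [Group N] (u v : M × N) :
    ⁅u, v⁆.1 = ⁅u.1, v.1⁆ :=
  rfl

@[simp]
theorem Prod.snd_commutatorElement {M N : Type*} [Group M] [Group N] (u v : M × N) :
    ⁅u, v⁆.2 = ⁅u.2, v.2⁆ :=
  rfl

section FiberProduct

variable {P₁ P₂ G : Type*} [Group P₁] [Group P₂] [CommGroup G] {φ : P₁ →* G} {ψ : P₂ →* G}
  {K : Subgroup (P₁ × P₂)}

theorem commutatorElement_mem_of_mem_iff (hK : ∀ p q, (p, q) ∈ K ↔ φ p = ψ q)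
    (u v : P₁ × P₂) : ⁅u, v⁆ ∈ K :=
  (hK ⁅u.1, v.1⁆ ⁅u.2, v.2⁆).mpr <| by
    rw [map_commutatorElement_eq_one, map_commutatorElement_eq_one]

theorem commutatorElement_mk_one_mem_commutator (hψ : Function.Surjective ψ)
    (hK : ∀ p q, (p, q) ∈ K ↔ φ p = ψ q) (v : P₁ × P₂) {c : P₁} (hc : φ c = 1) :
    ⁅v, (c, (1 : P₂))⁆ ∈ ⁅K, K⁆ := by
  obtain ⟨b, hb⟩ := hψ (φ v.1)
  have hv : ⁅v, (c, (1 : P₂))⁆ = ⁅(v.1, b), (c, (1 : P₂))⁆ := by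
    ext <;> simp
  rw [hv]
  exact Subgroup.commutator_mem_commutator ((hK _ _).mpr hb.symm) ((hK _ _).mpr (by simp [hc]))

theorem commutatorElement_one_mk_mem_commutator (hφ : Function.Surjective φ)
    (hK : ∀ p q, (p, q) ∈ K ↔ φ p = ψ q) (v : P₁ × P₂) {c : P₂} (hc : ψ c = 1) :
    ⁅v, ((1 : P₁), c)⁆ ∈ ⁅K, K⁆ := by
  obtain ⟨a, ha⟩ := hφ (ψ v.2)
  have hv : ⁅v, ((1 : P₁), c)⁆ = ⁅(a, v.2), ((1 : P₁), c)⁆ := by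
    ext <;> simp
  rw [hv]
  exact Subgroup.commutator_mem_commutator ((hK _ _).mpr ha) ((hK _ _).mpr (by simp [hc]))

theorem commutatorElement_mem_commutator_of_map_eq_one (hφ : Function.Surjective φ)
    (hψ : Function.Surjective ψ) (hK : ∀ p q, (p, q) ∈ K ↔ φ p = ψ q) (v c : P₁ × P₂)
    (h₁ : φ c.1 = 1) (h₂ : ψ c.2 = 1) : ⁅v, c⁆ ∈ ⁅K, K⁆ := by
  have hc : ⁅v, c⁆ = ⁅v, (c.1, (1 : P₂))⁆ * ⁅v, ((1 : P₁), c.2)⁆ := by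
    ext <;> simp
  rw [hc]
  exact mul_mem (commutatorElement_mk_one_mem_commutator hψ hK v h₁)
    (commutatorElement_one_mk_mem_commutator hφ hK v h₂)

end FiberProduct

/-- With `F = P₁ × P₂` and `K` the kernel of `(p,q) ↦ φ(p) - ψ(q)`,
for all `x y z ∈ F` the element `⁅x*y, z⁆ * (⁅x,z⁆ * ⁅y,z⁆)⁻¹` lies in `⁅K, K⁆`;
i.e. the induced commutator map `F × F → ⁅F,F⁆/⁅K,K⁆` is bilinear. -/
theorem commutator_map_bilinear_mod_commutator_of_kernel
    {P₁ P₂ G : Type*} [Group P₁] [Group P₂] [CommGroup G]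
    (φ : P₁ →* G) (ψ : P₂ →* G)
    (hφ : Function.Surjective φ) (hψ : Function.Surjective ψ)
    (K : Subgroup (P₁ × P₂))
    (hK : ∀ p q, (p, q) ∈ K ↔ φ p = ψ q) :
    ∀ x y z : P₁ × P₂, ⁅x * y, z⁆ * (⁅x, z⁆ * ⁅y, z⁆)⁻¹ ∈ ⁅K, K⁆ := by
  intro x y z
  rw [commutatorElement_mul_left_mul_inv]
  exact mul_mem
    (commutatorElement_mem_commutator_of_map_eq_one hφ hψ hK x ⁅y, z⁆
      (map_commutatorElement_eq_one φ _ _) (map_commutatorElement_eq_one ψ _ _))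
    (Subgroup.commutator_mem_commutator (commutatorElement_mem_of_mem_iff hK y z)
      (commutatorElement_mem_of_mem_iff hK x z))
end

section
/- Let P₁, P₂ be groups, G an abelian group, and φ : P₁ → G, ψ : P₂ → G surjective group homomorphisms. Let F = P₁ × P₂ and let K be the kernel of the homomorphism F → G given by (p,q) ↦ φ(p) − ψ(q). If p ∈ P₁ satisfies φ(p) = 0, then for every x ∈ F the commutator [(p,1), x] belongs to ⁅K, K⁆; likewise, if q ∈ P₂ satisfies ψ(q) = 0, then for every x ∈ F the commutator [(1,q), x] belongs to ⁅K, K⁆. -/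
open scoped commutatorElement

/-! Commutators in `P₁ × P₂` are computed componentwise, so `⁅(p, 1), (a, b)⁆ = (⁅p, a⁆, 1)` does
not depend on `b`. Since `ψ` is surjective, `b` may be replaced by some `c` with `ψ c = φ a`, making
`(a, c)` an element of `K`; as `(p, 1) ∈ K` when `φ p = 1`, the commutator lies in `⁅K, K⁆`.
The second claim is symmetric. -/

namespace Prod

variable {P₁ P₂ : Type*} [Group P₁] [Group P₂]

theorem commutatorElement_mk_s4 (a c : P₁) (b d : P₂) :
    ⁅((a, b) : P₁ × P₂), (c, d)⁆ = (⁅a, c⁆, ⁅b, d⁆) :=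
  rfl

theorem commutatorElement_mk_one_mem_commutator {K : Subgroup (P₁ × P₂)} {p : P₁}
    (hp : (p, 1) ∈ K) (hK : ∀ a, ∃ c, (a, c) ∈ K) (x : P₁ × P₂) :
    ⁅((p, 1) : P₁ × P₂), x⁆ ∈ ⁅K, K⁆ := by
  obtain ⟨a, b⟩ := x
  obtain ⟨c, hc⟩ := hK a
  have h : ⁅((p, 1) : P₁ × P₂), (a, b)⁆ = ⁅((p, 1) : P₁ × P₂), (a, c)⁆ := by
    simp only [commutatorElement_mk_s4, commutatorElement_one_left]
  rw [h]
  exact Subgroup.commutator_mem_commutator hp hc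

theorem commutatorElement_one_mk_mem_commutator {K : Subgroup (P₁ × P₂)} {q : P₂}
    (hq : (1, q) ∈ K) (hK : ∀ b, ∃ c, (c, b) ∈ K) (x : P₁ × P₂) :
    ⁅((1, q) : P₁ × P₂), x⁆ ∈ ⁅K, K⁆ := by
  obtain ⟨a, b⟩ := x
  obtain ⟨c, hc⟩ := hK b
  have h : ⁅((1, q) : P₁ × P₂), (a, b)⁆ = ⁅((1, q) : P₁ × P₂), (c, b)⁆ := by
    simp only [commutatorElement_mk_s4, commutatorElement_one_left]
  rw [h]
  exact Subgroup.commutator_mem_commutator hq hc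

end Prod

/-- With `F = P₁ × P₂` and `K` the kernel of `(p,q) ↦ φ(p) - ψ(q)`,
if `p ∈ P₁` satisfies `φ(p) = 1` then `⁅(p,1), x⁆ ∈ ⁅K,K⁆` for all `x ∈ F`,
and likewise if `q ∈ P₂` satisfies `ψ(q) = 1` then `⁅(1,q), x⁆ ∈ ⁅K,K⁆` for all `x ∈ F`. -/
theorem commutator_with_kernel_element_mem
    {P₁ P₂ G : Type*} [Group P₁] [Group P₂] [CommGroup G]
    (φ : P₁ →* G) (ψ : P₂ →* G)
    (hφ : Function.Surjective φ) (hψ : Function.Surjective ψ)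
    (K : Subgroup (P₁ × P₂))
    (hK : ∀ p q, (p, q) ∈ K ↔ φ p = ψ q) :
    (∀ p : P₁, φ p = 1 → ∀ x : P₁ × P₂, ⁅((p, 1) : P₁ × P₂), x⁆ ∈ ⁅K, K⁆) ∧
    (∀ q : P₂, ψ q = 1 → ∀ x : P₁ × P₂, ⁅((1, q) : P₁ × P₂), x⁆ ∈ ⁅K, K⁆) := by
  have hK₁ : ∀ a, ∃ c, (a, c) ∈ K := fun a ↦
    (hψ (φ a)).imp fun c hc ↦ (hK a c).2 hc.symm
  have hK₂ : ∀ b, ∃ c, (c, b) ∈ K := fun b ↦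
    (hφ (ψ b)).imp fun c hc ↦ (hK c b).2 hc
  refine ⟨fun p hp ↦ ?_, fun q hq ↦ ?_⟩
  · exact Prod.commutatorElement_mk_one_mem_commutator ((hK p 1).2 (by rw [hp, map_one])) hK₁
  · exact Prod.commutatorElement_one_mk_mem_commutator ((hK 1 q).2 (by rw [hq, map_one])) hK₂
end

section
/- Let F be a group of nilpotency class at most 2, i.e. ⁅F, ⁅F, F⁆⁆ = 1, let k ≥ 1 and n ≥ 1 be integers, and let a₁, …, aₙ ∈ F satisfy aᵢᵏ = 1 for all i and a₁ a₂ ⋯ aₙ = 1. Then ∏_{1 ≤ i < j ≤ n−1} [aᵢ, aⱼ]^{k(k−1)/2} = 1 (the product taken in any fixed order, all factors being central). -/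
open scoped commutatorElement

/-! Commutators are central in class two, so `(x y)^k ⁅x, y⁆^(k choose 2) = x^k y^k`, and by
induction `(a₁ ⋯ a_{n-1})^k · ∏_{i<j<n} ⁅aᵢ, aⱼ⁆^(k choose 2) = a₁^k ⋯ a_{n-1}^k`. Since
`a₁ ⋯ a_{n-1} = aₙ⁻¹` and every `aᵢ^k = 1`, both sides other than the commutator product are `1`. -/

theorem commute_commutatorElement_of_commutator_commutator_eq_bot {F : Type*} [Group F]
    (hnil : ⁅(⊤ : Subgroup F), ⁅(⊤ : Subgroup F), (⊤ : Subgroup F)⁆⁆ = ⊥) (x y g : F) :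
    Commute ⁅x, y⁆ g := by
  have h := Subgroup.commutator_mem_commutator (Subgroup.mem_top g)
    (Subgroup.commutator_mem_commutator (Subgroup.mem_top x) (Subgroup.mem_top y))
  rw [hnil, Subgroup.mem_bot, commutatorElement_eq_one_iff_commute] at h
  exact h.symm

section CentralCommutators

variable {F : Type*} [Group F] (hc : ∀ x y g : F, Commute ⁅x, y⁆ g)
include hc

theorem commutatorElement_mul_right_of_central (x y z : F) :
    ⁅x, y * z⁆ = ⁅x, y⁆ * ⁅x, z⁆ := by
  rw [commutatorElement_mul_right_eq_mul_conj, mul_assoc _ y, ← (hc x z y).eq, ← mul_assoc,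
    mul_inv_cancel_right]

theorem commutatorElement_pow_right_of_central (x y : F) (k : ℕ) :
    ⁅x, y ^ k⁆ = ⁅x, y⁆ ^ k := by
  induction k with
  | zero => simp
  | succ k ih => rw [pow_succ, commutatorElement_mul_right_of_central hc, ih, pow_succ]

theorem commutatorElement_list_prod_right_pow_of_central (x : F) (m : ℕ) (l : List F) :
    ⁅x, l.prod⁆ ^ m = (l.map fun y => ⁅x, y⁆ ^ m).prod := by
  induction l with
  | nil => simp
  | cons y l ih =>
    rw [List.prod_cons, commutatorElement_mul_right_of_central hc, (hc x y _).mul_pow, ih,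
      List.map_cons, List.prod_cons]

theorem mul_pow_mul_commutatorElement_pow_of_central (x y : F) (k : ℕ) :
    (x * y) ^ k * ⁅x, y⁆ ^ k.choose 2 = x ^ k * y ^ k := by
  induction k with
  | zero => simp
  | succ k ih =>
    have hswap : y ^ k * x * ⁅x, y⁆ ^ k = x * y ^ k := by
      rw [← commutatorElement_pow_right_of_central hc, ← (hc x (y ^ k) _).eq,
        commutatorElement_def]
      group
    calc (x * y) ^ (k + 1) * ⁅x, y⁆ ^ (k + 1).choose 2
        = (x * y) ^ k * (x * y) * (⁅x, y⁆ ^ k.choose 2 * ⁅x, y⁆ ^ k) := by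
          rw [pow_succ (x * y) k, Nat.choose_succ_succ', Nat.choose_one_right, Nat.add_comm k,
            pow_add]
      _ = (x * y) ^ k * ⁅x, y⁆ ^ k.choose 2 * (x * y * ⁅x, y⁆ ^ k) := by
          rw [mul_assoc ((x * y) ^ k) (x * y), ← mul_assoc (x * y),
            ← ((hc x y (x * y)).pow_left (k.choose 2)).eq, mul_assoc (⁅x, y⁆ ^ k.choose 2),
            ← mul_assoc ((x * y) ^ k)]
      _ = x ^ k * (y ^ k * x * ⁅x, y⁆ ^ k) * y := by
          simp only [ih, mul_assoc, ← ((hc x y y).pow_left k).eq]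
      _ = x ^ (k + 1) * y ^ (k + 1) := by
          rw [hswap, pow_succ, pow_succ]; simp only [mul_assoc]

end CentralCommutators

section OrderedCommutators

variable {F : Type*} [Group F]

def orderedCommutatorPows (m : ℕ) {N : ℕ} (g : Fin N → F) : List F :=
  (List.finRange N).flatMap fun i => ((List.finRange N).filter (i < ·)).map fun j => ⁅g i, g j⁆ ^ m

theorem orderedCommutatorPows_succ (m : ℕ) {N : ℕ} (g : Fin (N + 1) → F) :
    orderedCommutatorPows m g =
      (List.ofFn fun j => ⁅g 0, g j.succ⁆ ^ m) ++ orderedCommutatorPows m (Fin.tail g) := by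
  simp [orderedCommutatorPows, List.finRange_succ, List.filter_map, Function.comp_def,
    Fin.succ_pos, List.ofFn_eq_map, Fin.tail, List.flatMap_map]

theorem orderedCommutatorPows_init (m : ℕ) {N : ℕ} (a : Fin (N + 1) → F) :
    orderedCommutatorPows m (Fin.init a) =
      (List.finRange (N + 1)).flatMap fun i =>
        ((List.finRange (N + 1)).filter fun j => decide (i < j) && decide (j.val + 1 < N + 1)).map
          fun j => ⁅a i, a j⁆ ^ m := by
  simp [orderedCommutatorPows, List.finRange_succ_last, List.filter_map, Function.comp_def,
    Fin.init, List.flatMap_map, (Fin.castSucc_lt_last _).not_gt]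

theorem list_prod_ofFn_pow_mul_orderedCommutatorPows_prod_of_central
    (hc : ∀ x y g : F, Commute ⁅x, y⁆ g) {N : ℕ} (g : Fin N → F) (k : ℕ) :
    (List.ofFn g).prod ^ k * (orderedCommutatorPows (k.choose 2) g).prod =
      (List.ofFn fun i => g i ^ k).prod := by
  induction N with
  | zero => simp [orderedCommutatorPows]
  | succ N ih =>
    have hhead : (List.ofFn fun j => ⁅g 0, g j.succ⁆ ^ k.choose 2).prod =
        ⁅g 0, (List.ofFn (Fin.tail g)).prod⁆ ^ k.choose 2 := by
      rw [commutatorElement_list_prod_right_pow_of_central hc, List.map_ofFn]; rfl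
    rw [orderedCommutatorPows_succ, List.prod_append, hhead, List.ofFn_succ, List.prod_cons,
      List.ofFn_succ, List.prod_cons]
    change (g 0 * (List.ofFn (Fin.tail g)).prod) ^ k * _ =
      g 0 ^ k * (List.ofFn fun i => Fin.tail g i ^ k).prod
    rw [← ih, ← mul_assoc, mul_pow_mul_commutatorElement_pow_of_central hc, mul_assoc]

end OrderedCommutators

theorem prod_commutator_pow_eq_one_of_class_two_general
    {F : Type*} [Group F]
    (hnil : ⁅(⊤ : Subgroup F), ⁅(⊤ : Subgroup F), (⊤ : Subgroup F)⁆⁆ = ⊥)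
    (k n : ℕ) (a : Fin n → F)
    (hak : ∀ i, a i ^ k = 1)
    (haprod : (List.ofFn a).prod = 1) :
    (((List.finRange n).flatMap fun i =>
        (((List.finRange n).filter fun j => decide (i < j) && decide (j.val + 1 < n)).map
          fun j => ⁅a i, a j⁆ ^ (k * (k - 1) / 2))) : List F).prod = 1 := by
  obtain _ | N := n
  · simp
  have hinit : (List.ofFn (Fin.init a)).prod = (a (Fin.last N))⁻¹ := by
    rw [List.ofFn_succ', List.concat_eq_append, List.prod_append, List.prod_singleton] at haprod
    exact eq_inv_of_mul_eq_one_left haprod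
  have key := list_prod_ofFn_pow_mul_orderedCommutatorPows_prod_of_central
    (commute_commutatorElement_of_commutator_commutator_eq_bot hnil) (Fin.init a) k
  rw [hinit, inv_pow, hak, inv_one, one_mul] at key
  rw [← Nat.choose_two_right, ← orderedCommutatorPows_init, key]
  exact List.prod_eq_one (by simp [Fin.init, hak])

/-- In a group of nilpotency class ≤ 2, if `a₁, …, aₙ` satisfy `aᵢᵏ = 1`
and `a₁ ⋯ aₙ = 1`, then `∏_{i < j ≤ n-1} ⁅aᵢ, aⱼ⁆^(k(k-1)/2) = 1` (the factors are
central, hence commute, so the order of the product—here lexicographic—is irrelevant). -/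
theorem prod_commutator_pow_eq_one_of_class_two
    {F : Type*} [Group F]
    (hnil : ⁅(⊤ : Subgroup F), ⁅(⊤ : Subgroup F), (⊤ : Subgroup F)⁆⁆ = ⊥)
    (k n : ℕ) (hk : 1 ≤ k) (hn : 1 ≤ n) (a : Fin n → F)
    (hak : ∀ i, a i ^ k = 1)
    (haprod : (List.ofFn a).prod = 1) :
    (((List.finRange n).flatMap fun i =>
        (((List.finRange n).filter fun j => decide (i < j) && decide (j.val + 1 < n)).map
          fun j => ⁅a i, a j⁆ ^ (k * (k - 1) / 2))) : List F).prod = 1 :=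
  prod_commutator_pow_eq_one_of_class_two_general hnil k n a hak haprod
end

section
/- In the Bauer–Catanese case G = (ℤ/2ℤ)³: with F = Π₁ × Π₂ and K the kernel of (p,q) ↦ φ(p) − ψ(q), the quotient group ⁅F, F⁆ / ⁅K, K⁆ is isomorphic to (ℤ/2ℤ)². -/
/-- Relators of `Π₁ = ⟨a₁,…,a₅ ∣ a₁²,…,a₅², a₁a₂a₃a₄a₅⟩`. -/
def bcRels₁ : Set (FreeGroup (Fin 5)) :=
  {FreeGroup.of 0 ^ 2, FreeGroup.of 1 ^ 2, FreeGroup.of 2 ^ 2, FreeGroup.of 3 ^ 2,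
   FreeGroup.of 4 ^ 2,
   FreeGroup.of 0 * FreeGroup.of 1 * FreeGroup.of 2 * FreeGroup.of 3 * FreeGroup.of 4}

/-- Relators of `Π₂ = ⟨b₁,…,b₆ ∣ b₁²,…,b₆², b₁b₂b₃b₄b₅b₆⟩`. -/
def bcRels₂ : Set (FreeGroup (Fin 6)) :=
  {FreeGroup.of 0 ^ 2, FreeGroup.of 1 ^ 2, FreeGroup.of 2 ^ 2, FreeGroup.of 3 ^ 2,
   FreeGroup.of 4 ^ 2, FreeGroup.of 5 ^ 2,
   FreeGroup.of 0 * FreeGroup.of 1 * FreeGroup.of 2 * FreeGroup.of 3 * FreeGroup.of 4 *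
     FreeGroup.of 5}

/-- The group `G = (ℤ/2ℤ)³`, written multiplicatively. -/
abbrev bcG : Type := Multiplicative (ZMod 2 × ZMod 2 × ZMod 2)

/-!
Write `N = ⁅K, K⁆`, `Q = F ⧸ N` and `aᵢ` for the image of the `i`-th generator of `Π₁` in `Q`.
Since `φ` and `ψ` are onto the abelian group `G`, every `⁅(k, 1), (p, q)⁆` with `φ k = 1` and
`(p, q) ∈ K` lies in `N`; hence `Q` has class two and `x ↦ ⁅y, x⁆` on the first factor factors
through `φ`. As `φ a₀, φ a₁, φ a₂` span `G`, the commutators inside the first factor are generated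
by `⁅a₀, a₁⁆`, `⁅a₀, a₂⁆`, `⁅a₁, a₂⁆`, and squaring `a₃a₄ = a₂a₁a₀` shows `⁅a₁, a₂⁆ = 1`.
Commutators inside the second factor are inverses of commutators inside the first, because
commutators of elements of `K` vanish in `Q`. So `⁅Q, Q⁆` is generated by the two central
involutions `⁅a₀, a₁⁆`, `⁅a₀, a₂⁆`. They are independent: `F` maps to the central extension of
`(ℤ/2)³ × (ℤ/2)³` by `(ℤ/2)²` with a bilinear cocycle that is symmetric on the diagonal (so `N`
dies), and there the two commutators become the two basis vectors of `(ℤ/2)²`.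
-/

open scoped commutatorElement
open Subgroup

namespace ClassTwo

variable {G : Type*} [Group G] (hG : ∀ x y z : G, Commute ⁅x, y⁆ z)
include hG

theorem commutatorElement_mul_right (x y z : G) : ⁅x, y * z⁆ = ⁅x, y⁆ * ⁅x, z⁆ := by
  rw [commutatorElement_mul_right_eq_mul_conj, mul_assoc _ y, ← (hG x z y).eq, mul_assoc,
    mul_inv_cancel_right]

def commutatorHom (x : G) : G →* G where
  toFun := (⁅x, ·⁆)
  map_one' := commutatorElement_one_right x
  map_mul' := commutatorElement_mul_right hG x

theorem commutatorElement_pow_right (x y : G) (n : ℕ) : ⁅x, y ^ n⁆ = ⁅x, y⁆ ^ n :=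
  map_pow (commutatorHom hG x) y n

theorem sq_mul (a b : G) : (a * b) ^ 2 = ⁅b, a⁆ * a ^ 2 * b ^ 2 := by
  calc (a * b) ^ 2 = a * ⁅b, a⁆ * (a * b * b) := by rw [sq]; group
    _ = ⁅b, a⁆ * a * (a * b * b) := by rw [← (hG b a a).eq]
    _ = ⁅b, a⁆ * a ^ 2 * b ^ 2 := by simp only [sq, mul_assoc]

theorem commutator_le_of_closure_eq_top {T : Set G} (hT : closure T = ⊤) {W : Subgroup G}
    (hW : ∀ s ∈ T, ∀ t ∈ T, ⁅s, t⁆ ∈ W) : commutator G ≤ W := by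
  have mem_of_generators (y : G) (hy : ∀ s ∈ T, ⁅y, s⁆ ∈ W) (x : G) : ⁅y, x⁆ ∈ W :=
    (closure_le (W.comap (commutatorHom hG y)) |>.mpr hy) (hT ▸ mem_top x)
  rw [_root_.commutator_def, commutator_le]
  rintro x - y -
  rw [← commutatorElement_inv, inv_mem_iff]
  refine mem_of_generators y (fun s hs => ?_) x
  rw [← commutatorElement_inv, inv_mem_iff]
  exact mem_of_generators s (hW s hs) y

end ClassTwo

theorem apply_mem_of_map_closure_eq_top {H M G : Type*} [Group H] [Group M] [Group G]
    {f : H →* M} {ψ : H →* G} {S : Set H} (hS : (closure S).map ψ = ⊤) (hker : ψ.ker ≤ f.ker)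
    {W : Subgroup M} (hW : ∀ s ∈ S, f s ∈ W) (h : H) : f h ∈ W := by
  have htop : closure S ⊔ ψ.ker = ⊤ := by rw [← comap_map_eq, hS, comap_top]
  have hle : closure S ⊔ ψ.ker ≤ W.comap f :=
    sup_le ((closure_le _).mpr hW) (hker.trans (ker_le_comap f W))
  exact hle (htop ▸ mem_top h)

def zmodPairHom {G : Type*} [Group G] {n : ℕ} [NeZero n] {x y : G} (hx : x ^ n = 1)
    (hy : y ^ n = 1) (hxy : Commute x y) : Multiplicative (ZMod n × ZMod n) →* G where
  toFun z := x ^ z.toAdd.1.val * y ^ z.toAdd.2.val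
  map_one' := by simp
  map_mul' z w := by
    simp only [toAdd_mul, Prod.fst_add, Prod.snd_add, ZMod.val_add, ← pow_eq_pow_mod _ hx,
      ← pow_eq_pow_mod _ hy, pow_add]
    exact (hxy.pow_pow _ _).mul_mul_mul_comm _ _

section

variable {A C : Type*} [AddCommGroup A] [AddCommGroup C]

@[ext]
structure BilinExt (β : A →+ A →+ C) where
  central : C
  base : A

namespace BilinExt

variable {β : A →+ A →+ C}

instance : Mul (BilinExt β) :=
  ⟨fun x y => ⟨x.central + y.central + β x.base y.base, x.base + y.base⟩⟩

instance : One (BilinExt β) := ⟨⟨0, 0⟩⟩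

instance : Inv (BilinExt β) := ⟨fun x => ⟨-x.central + β x.base x.base, -x.base⟩⟩

@[simp] theorem mul_central (x y : BilinExt β) :
    (x * y).central = x.central + y.central + β x.base y.base := rfl

@[simp] theorem mul_base (x y : BilinExt β) : (x * y).base = x.base + y.base := rfl

@[simp] theorem one_central : (1 : BilinExt β).central = 0 := rfl

@[simp] theorem one_base : (1 : BilinExt β).base = 0 := rfl

@[simp] theorem inv_central (x : BilinExt β) : x⁻¹.central = -x.central + β x.base x.base := rfl

@[simp] theorem inv_base (x : BilinExt β) : x⁻¹.base = -x.base := rfl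

instance : Group (BilinExt β) :=
  Group.ofLeftAxioms
    (fun x y z => by
      ext <;> simp only [mul_central, mul_base, map_add, AddMonoidHom.add_apply] <;> abel)
    (fun x => by ext <;> simp)
    (fun x => by ext <;> simp)

instance [DecidableEq A] [DecidableEq C] : DecidableEq (BilinExt β) := fun x y =>
  decidable_of_iff (x.central = y.central ∧ x.base = y.base) BilinExt.ext_iff.symm

theorem commute_iff {x y : BilinExt β} : Commute x y ↔ β x.base y.base = β y.base x.base := by
  rw [Commute, SemiconjBy, BilinExt.ext_iff]
  simp only [mul_central, mul_base, add_comm x.base, and_true, add_comm x.central, add_right_inj]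

def baseHom : BilinExt β →* Multiplicative A where
  toFun x := .ofAdd x.base
  map_one' := rfl
  map_mul' _ _ := rfl

def ofCentral : Multiplicative C →* BilinExt β where
  toFun z := ⟨z.toAdd, 0⟩
  map_one' := rfl
  map_mul' _ _ := by ext <;> simp

theorem ofCentral_injective : Function.Injective (ofCentral (β := β)) :=
  fun _ _ h => congrArg BilinExt.central h

end BilinExt

end

section FiberProduct

variable {H₁ H₂ G : Type*} [Group H₁] [Group H₂] [CommGroup G]

abbrev fiberProduct (φ : H₁ →* G) (ψ : H₂ →* G) : Subgroup (H₁ × H₂) :=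
  MonoidHom.ker (φ.comp (MonoidHom.fst H₁ H₂) / ψ.comp (MonoidHom.snd H₁ H₂))

variable {φ : H₁ →* G} {ψ : H₂ →* G}

theorem mk_mem_fiberProduct {p : H₁} {q : H₂} : (p, q) ∈ fiberProduct φ ψ ↔ φ p = ψ q := by
  simp [div_eq_one]

theorem prod_commutatorElement (x y : H₁ × H₂) : ⁅x, y⁆ = (⁅x.1, y.1⁆, ⁅x.2, y.2⁆) := rfl

theorem commutatorElement_inl_mem (hψ : Function.Surjective ψ) {k : H₁} (hk : φ k = 1)
    (p : H₁) :
    ((⁅k, p⁆, 1) : H₁ × H₂) ∈ ⁅fiberProduct φ ψ, fiberProduct φ ψ⁆ := by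
  obtain ⟨q, hq⟩ := hψ (φ p)
  have hk' : ((k, 1) : H₁ × H₂) ∈ fiberProduct φ ψ :=
    mk_mem_fiberProduct.mpr (by rw [hk, map_one])
  simpa [prod_commutatorElement] using
    commutator_mem_commutator hk' (mk_mem_fiberProduct.mpr hq.symm)

theorem commutatorElement_inr_mem (hφ : Function.Surjective φ) {k : H₂} (hk : ψ k = 1)
    (q : H₂) :
    ((1, ⁅k, q⁆) : H₁ × H₂) ∈ ⁅fiberProduct φ ψ, fiberProduct φ ψ⁆ := by
  obtain ⟨p, hp⟩ := hφ (ψ q)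
  have hk' : ((1, k) : H₁ × H₂) ∈ fiberProduct φ ψ :=
    mk_mem_fiberProduct.mpr (by rw [hk, map_one])
  simpa [prod_commutatorElement] using
    commutator_mem_commutator hk' (mk_mem_fiberProduct.mpr hp)

theorem commutator_central_quotient (hφ : Function.Surjective φ)
    (hψ : Function.Surjective ψ) (x y z : (H₁ × H₂) ⧸ ⁅fiberProduct φ ψ, fiberProduct φ ψ⁆) :
    Commute ⁅x, y⁆ z := by
  obtain ⟨a, rfl⟩ := QuotientGroup.mk'_surjective _ x
  obtain ⟨b, rfl⟩ := QuotientGroup.mk'_surjective _ y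
  obtain ⟨c, rfl⟩ := QuotientGroup.mk'_surjective _ z
  rw [← commutatorElement_eq_one_iff_commute, ← map_commutatorElement, ← map_commutatorElement,
    QuotientGroup.mk'_apply, QuotientGroup.eq_one_iff]
  have split : ⁅⁅a, b⁆, c⁆ = ((⁅⁅a.1, b.1⁆, c.1⁆, 1) : H₁ × H₂) * (1, ⁅⁅a.2, b.2⁆, c.2⁆) := by
    simp [prod_commutatorElement]
  have hφab : φ ⁅a.1, b.1⁆ = 1 := by rw [map_commutatorElement, (Commute.all _ _).commutator_eq]
  have hψab : ψ ⁅a.2, b.2⁆ = 1 := by rw [map_commutatorElement, (Commute.all _ _).commutator_eq]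
  rw [split]
  exact mul_mem (commutatorElement_inl_mem hψ hφab _) (commutatorElement_inr_mem hφ hψab _)

theorem commutatorElement_mk_inl_eq_one (hψ : Function.Surjective ψ) {k : H₁} (hk : φ k = 1)
    (x : (H₁ × H₂) ⧸ ⁅fiberProduct φ ψ, fiberProduct φ ψ⁆) :
    ⁅x, QuotientGroup.mk' ⁅fiberProduct φ ψ, fiberProduct φ ψ⁆ (k, 1)⁆ = 1 := by
  obtain ⟨a, rfl⟩ := QuotientGroup.mk'_surjective _ x
  rw [← commutatorElement_inv, inv_eq_one, ← map_commutatorElement, QuotientGroup.mk'_apply,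
    QuotientGroup.eq_one_iff]
  simpa [prod_commutatorElement] using commutatorElement_inl_mem hψ hk a.1

theorem mk_commutatorElement_inl_mul_inr {p p' : H₁} {q q' : H₂} (h : φ p = ψ q)
    (h' : φ p' = ψ q') :
    QuotientGroup.mk' ⁅fiberProduct φ ψ, fiberProduct φ ψ⁆ (⁅p, p'⁆, 1) *
      QuotientGroup.mk' _ (1, ⁅q, q'⁆) = 1 := by
  rw [← map_mul, QuotientGroup.mk'_apply, QuotientGroup.eq_one_iff]
  simpa [prod_commutatorElement] using
    commutator_mem_commutator (mk_mem_fiberProduct.mpr h) (mk_mem_fiberProduct.mpr h')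

end FiberProduct

namespace BauerCatanese

open Multiplicative PresentedGroup

theorem lift_eq_one_of_mem_bcRels₁ {M : Type*} [Group M] {f : Fin 5 → M}
    (hsq : ∀ i, f i ^ 2 = 1) (hprod : f 0 * f 1 * f 2 * f 3 * f 4 = 1) :
    ∀ r ∈ bcRels₁, FreeGroup.lift f r = 1 := by
  simp only [bcRels₁, Set.mem_insert_iff, Set.mem_singleton_iff, forall_eq_or_imp, forall_eq,
    map_pow, map_mul, FreeGroup.lift_apply_of]
  exact ⟨hsq 0, hsq 1, hsq 2, hsq 3, hsq 4, hprod⟩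

theorem lift_eq_one_of_mem_bcRels₂ {M : Type*} [Group M] {f : Fin 6 → M}
    (hsq : ∀ i, f i ^ 2 = 1) (hprod : f 0 * f 1 * f 2 * f 3 * f 4 * f 5 = 1) :
    ∀ r ∈ bcRels₂, FreeGroup.lift f r = 1 := by
  simp only [bcRels₂, Set.mem_insert_iff, Set.mem_singleton_iff, forall_eq_or_imp, forall_eq,
    map_pow, map_mul, FreeGroup.lift_apply_of]
  exact ⟨hsq 0, hsq 1, hsq 2, hsq 3, hsq 4, hsq 5, hprod⟩

theorem of_sq_eq_one₁ (i : Fin 5) : (of i : PresentedGroup bcRels₁) ^ 2 = 1 := by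
  rw [of, ← map_pow]
  exact one_of_mem (by fin_cases i <;> simp [bcRels₁])

theorem of_prod_eq_one₁ :
    (of 0 * of 1 * of 2 * of 3 * of 4 : PresentedGroup bcRels₁) = 1 := by
  simp only [of, ← map_mul]
  exact one_of_mem (by simp [bcRels₁])

def φVal : Fin 5 → bcG :=
  ![ofAdd (1, 0, 0), ofAdd (0, 1, 0), ofAdd (0, 0, 1), ofAdd (1, 0, 0), ofAdd (0, 1, 1)]

def ψVal : Fin 6 → bcG :=
  ![ofAdd (1, 1, 0), ofAdd (1, 0, 1), ofAdd (1, 1, 1), ofAdd (1, 1, 0), ofAdd (1, 0, 1),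
    ofAdd (1, 1, 1)]

def φ₀ : PresentedGroup bcRels₁ →* bcG :=
  toGroup (lift_eq_one_of_mem_bcRels₁ (f := φVal) (by decide) (by decide))

def ψ₀ : PresentedGroup bcRels₂ →* bcG :=
  toGroup (lift_eq_one_of_mem_bcRels₂ (f := ψVal) (by decide) (by decide))

theorem φ₀_of (i : Fin 5) : φ₀ (of i) = φVal i := toGroup.of _
theorem ψ₀_of (i : Fin 6) : ψ₀ (of i) = ψVal i := toGroup.of _

theorem closure_eq_top_of_forall_pow_mul {u v w : bcG}
    (h : ∀ g : bcG, ∃ a b c : ZMod 2, u ^ a.val * v ^ b.val * w ^ c.val = g) :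
    Subgroup.closure {u, v, w} = ⊤ := by
  refine eq_top_iff.mpr fun g _ => ?_
  obtain ⟨a, b, c, rfl⟩ := h g
  have mem (x) (hx : x ∈ ({u, v, w} : Set bcG)) := Subgroup.subset_closure hx
  exact mul_mem (mul_mem (pow_mem (mem u (by simp)) _) (pow_mem (mem v (by simp)) _))
    (pow_mem (mem w (by simp)) _)

theorem map_closure_φ₀ : (Subgroup.closure {of 0, of 1, of 2}).map φ₀ = ⊤ := by
  rw [MonoidHom.map_closure, Set.image_insert_eq, Set.image_insert_eq, Set.image_singleton,
    φ₀_of, φ₀_of, φ₀_of]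
  exact closure_eq_top_of_forall_pow_mul (by decide)

theorem map_closure_ψ₀ : (Subgroup.closure {of 0, of 1, of 2}).map ψ₀ = ⊤ := by
  rw [MonoidHom.map_closure, Set.image_insert_eq, Set.image_insert_eq, Set.image_singleton,
    ψ₀_of, ψ₀_of, ψ₀_of]
  exact closure_eq_top_of_forall_pow_mul (by decide)

theorem φ₀_surjective : Function.Surjective φ₀ :=
  MonoidHom.range_eq_top.mp (top_le_iff.mp (map_closure_φ₀ ▸ map_le_range _ _))

theorem ψ₀_surjective : Function.Surjective ψ₀ :=
  MonoidHom.range_eq_top.mp (top_le_iff.mp (map_closure_ψ₀ ▸ map_le_range _ _))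

abbrev Q : Type :=
  (PresentedGroup bcRels₁ × PresentedGroup bcRels₂) ⧸ ⁅fiberProduct φ₀ ψ₀, fiberProduct φ₀ ψ₀⁆

def ι₁ : PresentedGroup bcRels₁ →* Q := (QuotientGroup.mk' _).comp (MonoidHom.inl _ _)

def ι₂ : PresentedGroup bcRels₂ →* Q := (QuotientGroup.mk' _).comp (MonoidHom.inr _ _)

abbrev x₁ : Q := ⁅ι₁ (of 0), ι₁ (of 1)⁆

abbrev x₂ : Q := ⁅ι₁ (of 0), ι₁ (of 2)⁆

theorem ι₁_apply (p : PresentedGroup bcRels₁) : ι₁ p = QuotientGroup.mk' _ (p, 1) := rfl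

theorem ι₂_apply (q : PresentedGroup bcRels₂) : ι₂ q = QuotientGroup.mk' _ (1, q) := rfl

theorem commute_ι₁_ι₂ (p : PresentedGroup bcRels₁) (q : PresentedGroup bcRels₂) :
    Commute (ι₁ p) (ι₂ q) :=
  (MonoidHom.commute_inl_inr p q).map (QuotientGroup.mk' _)

theorem commutator_central (x y z : Q) : Commute ⁅x, y⁆ z :=
  commutator_central_quotient φ₀_surjective ψ₀_surjective x y z

theorem commutatorElement_ι₁_congr (x : Q) {p p' : PresentedGroup bcRels₁}
    (h : φ₀ p = φ₀ p') : ⁅x, ι₁ p⁆ = ⁅x, ι₁ p'⁆ := by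
  have hk : φ₀ (p⁻¹ * p') = 1 := by rw [map_mul, map_inv, h, inv_mul_cancel]
  calc ⁅x, ι₁ p⁆ = ⁅x, ι₁ p⁆ * ⁅x, ι₁ (p⁻¹ * p')⁆ := by
        rw [ι₁_apply (_ * _), commutatorElement_mk_inl_eq_one ψ₀_surjective hk x, mul_one]
    _ = ⁅x, ι₁ p'⁆ := by
        rw [← ClassTwo.commutatorElement_mul_right commutator_central, ← map_mul,
          mul_inv_cancel_left]

theorem ι₁_of_sq (i : Fin 5) : ι₁ (of i) ^ 2 = 1 := by
  rw [← map_pow, of_sq_eq_one₁, map_one]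

theorem commutatorElement_ι₁_of_sq (x : Q) (i : Fin 5) : ⁅x, ι₁ (of i)⁆ ^ 2 = 1 := by
  rw [← ClassTwo.commutatorElement_pow_right commutator_central, ι₁_of_sq,
    commutatorElement_one_right]

theorem x₁_sq : x₁ ^ 2 = 1 := commutatorElement_ι₁_of_sq _ 1

theorem x₂_sq : x₂ ^ 2 = 1 := commutatorElement_ι₁_of_sq _ 2

theorem ι₁_of_inv (i : Fin 5) : (ι₁ (of i))⁻¹ = ι₁ (of i) :=
  inv_eq_of_mul_eq_one_right (by rw [← sq, ι₁_of_sq])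

theorem ι₁_of_three_mul_four :
    ι₁ (of 3) * ι₁ (of 4) = ι₁ (of 2) * ι₁ (of 1) * ι₁ (of 0) := by
  have h := congrArg ι₁ of_prod_eq_one₁
  simp only [map_mul, map_one] at h
  calc ι₁ (of 3) * ι₁ (of 4)
      = (ι₁ (of 0) * ι₁ (of 1) * ι₁ (of 2))⁻¹ *
          (ι₁ (of 0) * ι₁ (of 1) * ι₁ (of 2) * ι₁ (of 3) * ι₁ (of 4)) := by group
    _ = (ι₁ (of 2))⁻¹ * (ι₁ (of 1))⁻¹ * (ι₁ (of 0))⁻¹ := by rw [h]; group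
    _ = ι₁ (of 2) * ι₁ (of 1) * ι₁ (of 0) := by rw [ι₁_of_inv, ι₁_of_inv, ι₁_of_inv]

theorem commutatorElement_ι₁_one_two : ⁅ι₁ (of 1), ι₁ (of 2)⁆ = 1 := by
  have hφ₃ : φ₀ (of 3) = φ₀ (of 0) := by rw [φ₀_of, φ₀_of]; rfl
  have hφ₄ : φ₀ (of 4) = φ₀ (of 1 * of 2) := by rw [map_mul, φ₀_of, φ₀_of, φ₀_of]; decide
  -- square both sides of `a₃ a₄ = a₂ a₁ a₀`
  have lhs : (ι₁ (of 3) * ι₁ (of 4)) ^ 2 = (x₁ * x₂)⁻¹ := by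
    rw [ClassTwo.sq_mul commutator_central, ι₁_of_sq, ι₁_of_sq, mul_one, mul_one,
      commutatorElement_ι₁_congr _ hφ₃, ← commutatorElement_inv, commutatorElement_ι₁_congr _ hφ₄,
      map_mul, ClassTwo.commutatorElement_mul_right commutator_central]
  have rhs : (ι₁ (of 2) * (ι₁ (of 1) * ι₁ (of 0))) ^ 2 = x₂ * ⁅ι₁ (of 1), ι₁ (of 2)⁆ * x₁ := by
    rw [ClassTwo.sq_mul commutator_central, ClassTwo.sq_mul commutator_central, ι₁_of_sq,
      ι₁_of_sq, ι₁_of_sq, mul_one, mul_one, mul_one, ← commutatorElement_inv,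
      ClassTwo.commutatorElement_mul_right commutator_central, mul_inv_rev,
      commutatorElement_inv, commutatorElement_inv]
  have key : (x₁ * x₂)⁻¹ = x₂ * ⁅ι₁ (of 1), ι₁ (of 2)⁆ * x₁ := by
    rw [← lhs, ← rhs, ι₁_of_three_mul_four, mul_assoc]
  calc ⁅ι₁ (of 1), ι₁ (of 2)⁆ = x₂⁻¹ * (x₂ * ⁅ι₁ (of 1), ι₁ (of 2)⁆ * x₁) * x₁⁻¹ := by group
    _ = (x₁ ^ 2 * x₂ ^ 2)⁻¹ := by rw [← key]; simp only [sq, mul_inv_rev, mul_assoc]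
    _ = 1 := by rw [x₁_sq, x₂_sq, one_mul, inv_one]

theorem commutatorElement_ι₁_mem_closure (p p' : PresentedGroup bcRels₁) :
    ⁅ι₁ p, ι₁ p'⁆ ∈ Subgroup.closure {x₁, x₂} := by
  set S : Set (PresentedGroup bcRels₁) := {of 0, of 1, of 2}
  set W := Subgroup.closure ({x₁, x₂} : Set Q)
  have hx₁ : x₁ ∈ W := Subgroup.subset_closure (by simp)
  have hx₂ : x₂ ∈ W := Subgroup.subset_closure (by simp)
  have swap {u v : Q} (h : ⁅u, v⁆ ∈ W) : ⁅v, u⁆ ∈ W := by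
    rw [← commutatorElement_inv]
    exact inv_mem h
  have diag (u : Q) : ⁅u, u⁆ ∈ W := by
    rw [commutatorElement_self]
    exact one_mem W
  have hy : ⁅ι₁ (of 1), ι₁ (of 2)⁆ ∈ W := by
    rw [commutatorElement_ι₁_one_two]
    exact one_mem W
  have gen : ∀ s ∈ S, ∀ t ∈ S, ⁅ι₁ s, ι₁ t⁆ ∈ W := by
    rintro _ (rfl | rfl | rfl) _ (rfl | rfl | rfl)
    exacts [diag _, hx₁, hx₂, swap hx₁, diag _, hy, swap hx₂, swap hy, diag _]
  -- `p ↦ ⁅x, ι₁ p⁆` kills `ker φ₀`, so it is determined by the images of `of 0, of 1, of 2`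
  have extend (x : Q) (hx : ∀ s ∈ S, ⁅x, ι₁ s⁆ ∈ W) (p : PresentedGroup bcRels₁) :
      ⁅x, ι₁ p⁆ ∈ W :=
    apply_mem_of_map_closure_eq_top (f := (ClassTwo.commutatorHom commutator_central x).comp ι₁)
      map_closure_φ₀ (fun _ hk => commutatorElement_mk_inl_eq_one ψ₀_surjective hk x) hx p
  exact extend _ (fun s hs => swap (extend _ (gen s hs) p)) p'

theorem commutatorElement_ι₂_mem_closure (q q' : PresentedGroup bcRels₂) :
    ⁅ι₂ q, ι₂ q'⁆ ∈ Subgroup.closure {x₁, x₂} := by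
  obtain ⟨p, hp⟩ := φ₀_surjective (ψ₀ q)
  obtain ⟨p', hp'⟩ := φ₀_surjective (ψ₀ q')
  have h : ι₂ ⁅q, q'⁆ = (ι₁ ⁅p, p'⁆)⁻¹ :=
    eq_inv_of_mul_eq_one_right (mk_commutatorElement_inl_mul_inr hp hp')
  rw [← map_commutatorElement, h, map_commutatorElement]
  exact inv_mem (commutatorElement_ι₁_mem_closure p p')

theorem commutator_le_closure : commutator Q ≤ Subgroup.closure {x₁, x₂} := by
  refine ClassTwo.commutator_le_of_closure_eq_top commutator_central
    (T := Set.range ι₁ ∪ Set.range ι₂) ?_ ?_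
  · refine eq_top_iff.mpr fun x _ => ?_
    obtain ⟨⟨p, q⟩, rfl⟩ := QuotientGroup.mk'_surjective _ x
    have split : QuotientGroup.mk' _ (p, q) = ι₁ p * ι₂ q := by
      rw [ι₁_apply, ι₂_apply, ← map_mul, Prod.mk_mul_mk, mul_one, one_mul]
    rw [split]
    exact mul_mem (Subgroup.subset_closure (Or.inl ⟨p, rfl⟩))
      (Subgroup.subset_closure (Or.inr ⟨q, rfl⟩))
  · rintro _ (⟨p, rfl⟩ | ⟨q, rfl⟩) _ (⟨p', rfl⟩ | ⟨q', rfl⟩)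
    · exact commutatorElement_ι₁_mem_closure p p'
    · rw [(commute_ι₁_ι₂ p q').commutator_eq]
      exact one_mem _
    · rw [(commute_ι₁_ι₂ p' q).symm.commutator_eq]
      exact one_mem _
    · exact commutatorElement_ι₂_mem_closure q q'

abbrev V : Type := ZMod 2 × ZMod 2 × ZMod 2

-- On `V × 0` the commutator form `β x y - β y x` sends `(e₀, e₁) ↦ (1, 0)`, `(e₀, e₂) ↦ (0, 1)`
-- and `(e₁, e₂) ↦ 0`; the terms from the second `V` make `β` symmetric on the diagonal
-- `{(v, v)}`, where the bases of the elements of `Θ K` lie.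
def form (x y : V × V) : ZMod 2 × ZMod 2 :=
  (x.1.1 * y.1.2.1 + (x.2.1 + x.2.2.1) * y.2.2.1, x.1.1 * y.1.2.2 + (x.2.1 + x.2.2.2) * y.2.2.2)

def β : V × V →+ V × V →+ ZMod 2 × ZMod 2 :=
  AddMonoidHom.mk' (fun x => AddMonoidHom.mk' (form x) fun y y' => by
      simp only [form, Prod.fst_add, Prod.snd_add, Prod.mk_add_mk]; ext <;> ring)
    fun x x' => by
      ext y <;>
        simp only [AddMonoidHom.mk'_apply, form, AddMonoidHom.add_apply, Prod.fst_add,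
          Prod.snd_add] <;>
        ring

abbrev U : Type := BilinExt β

theorem β_inl_inr (u w : V) : β (u, 0) (0, w) = β (0, w) (u, 0) := by
  revert u w
  decide

theorem β_diag (u w : V) : β (u, u) (w, w) = β (w, w) (u, u) := by
  revert u w
  decide

-- the central part at `of 3` cancels the cocycle terms of the product relation
def ΘVal₁ (i : Fin 5) : U := ⟨if i = 3 then (1, 1) else 0, ((φVal i).toAdd, 0)⟩

def ΘVal₂ (j : Fin 6) : U := ⟨0, (0, (ψVal j).toAdd)⟩

def Θ₁ : PresentedGroup bcRels₁ →* U :=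
  toGroup (lift_eq_one_of_mem_bcRels₁ (f := ΘVal₁) (by decide) (by decide))

def Θ₂ : PresentedGroup bcRels₂ →* U :=
  toGroup (lift_eq_one_of_mem_bcRels₂ (f := ΘVal₂) (by decide) (by decide))

theorem Θ₁_base (p : PresentedGroup bcRels₁) : (Θ₁ p).base = ((φ₀ p).toAdd, 0) := by
  have : BilinExt.baseHom.comp Θ₁ = (AddMonoidHom.inl V V).toMultiplicative.comp φ₀ :=
    PresentedGroup.ext fun i => by
      simp only [MonoidHom.comp_apply, Θ₁, φ₀_of, toGroup.of]
      rfl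
  exact congrArg toAdd (DFunLike.congr_fun this p)

theorem Θ₂_base (q : PresentedGroup bcRels₂) : (Θ₂ q).base = (0, (ψ₀ q).toAdd) := by
  have : BilinExt.baseHom.comp Θ₂ = (AddMonoidHom.inr V V).toMultiplicative.comp ψ₀ :=
    PresentedGroup.ext fun j => by
      simp only [MonoidHom.comp_apply, Θ₂, ψ₀_of, toGroup.of]
      rfl
  exact congrArg toAdd (DFunLike.congr_fun this q)

def Θ : PresentedGroup bcRels₁ × PresentedGroup bcRels₂ →* U :=
  Θ₁.noncommCoprod Θ₂ fun p q => BilinExt.commute_iff.mpr <| by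
    rw [Θ₁_base, Θ₂_base]
    exact β_inl_inr _ _

theorem Θ_base (f : PresentedGroup bcRels₁ × PresentedGroup bcRels₂) :
    (Θ f).base = ((φ₀ f.1).toAdd, (ψ₀ f.2).toAdd) := by
  simp [Θ, MonoidHom.noncommCoprod_apply, Θ₁_base, Θ₂_base]

theorem commutator_fiberProduct_le_ker_Θ : ⁅fiberProduct φ₀ ψ₀, fiberProduct φ₀ ψ₀⁆ ≤ Θ.ker := by
  rw [commutator_le]
  rintro f hf f' hf'
  rw [MonoidHom.mem_ker, map_commutatorElement, commutatorElement_eq_one_iff_commute,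
    BilinExt.commute_iff, Θ_base, Θ_base, mk_mem_fiberProduct.mp hf, mk_mem_fiberProduct.mp hf']
  exact β_diag _ _

def Θbar : Q →* U := QuotientGroup.lift _ Θ commutator_fiberProduct_le_ker_Θ

theorem Θbar_ι₁_of (i : Fin 5) : Θbar (ι₁ (of i)) = ΘVal₁ i := by
  simp [Θbar, ι₁_apply, Θ, MonoidHom.noncommCoprod_apply, Θ₁, toGroup.of]

theorem Θbar_x₁ : Θbar x₁ = BilinExt.ofCentral (ofAdd (1, 0)) := by
  rw [map_commutatorElement, Θbar_ι₁_of, Θbar_ι₁_of]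
  decide

theorem Θbar_x₂ : Θbar x₂ = BilinExt.ofCentral (ofAdd (0, 1)) := by
  rw [map_commutatorElement, Θbar_ι₁_of, Θbar_ι₁_of]
  decide

def ξ : Multiplicative (ZMod 2 × ZMod 2) →* Q :=
  zmodPairHom x₁_sq x₂_sq (commutator_central _ _ _)

theorem Θbar_comp_ξ : Θbar.comp ξ = BilinExt.ofCentral := by
  refine MonoidHom.ext fun z => ?_
  change Θbar (x₁ ^ _ * x₂ ^ _) = _
  rw [map_mul, map_pow, map_pow, Θbar_x₁, Θbar_x₂]
  revert z
  decide

theorem ξ_injective : Function.Injective ξ :=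
  .of_comp (f := Θbar) <| by
    rw [← MonoidHom.coe_comp, Θbar_comp_ξ]
    exact BilinExt.ofCentral_injective

theorem range_ξ : ξ.range = commutator Q := by
  refine le_antisymm ?_ (commutator_le_closure.trans ((Subgroup.closure_le _).mpr ?_))
  · have hx₁ : x₁ ∈ commutator Q := commutator_mem_commutator (mem_top _) (mem_top _)
    have hx₂ : x₂ ∈ commutator Q := commutator_mem_commutator (mem_top _) (mem_top _)
    rintro _ ⟨z, rfl⟩
    exact mul_mem (pow_mem hx₁ _) (pow_mem hx₂ _)
  · rintro _ (rfl | rfl)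
    exacts [⟨ofAdd (1, 0), show x₁ ^ 1 * x₂ ^ 0 = x₁ by rw [pow_one, pow_zero, mul_one]⟩,
      ⟨ofAdd (0, 1), show x₁ ^ 0 * x₂ ^ 1 = x₂ by rw [pow_one, pow_zero, one_mul]⟩]

end BauerCatanese

open BauerCatanese

/-- Bauer–Catanese case `G = (ℤ/2ℤ)³`. With `F = Π₁ × Π₂` and `K` the
kernel of `(p,q) ↦ φ(p) - ψ(q)`, the quotient `⁅F,F⁆/⁅K,K⁆` (realized as the image
of `⁅F,F⁆` in `F/⁅K,K⁆`) is isomorphic to `(ℤ/2ℤ)²`. -/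
theorem bauer_catanese_Z23_commutator_quotient
    (φ : PresentedGroup bcRels₁ →* bcG) (ψ : PresentedGroup bcRels₂ →* bcG)
    (hφ0 : φ (PresentedGroup.of 0) = Multiplicative.ofAdd (1, 0, 0))
    (hφ1 : φ (PresentedGroup.of 1) = Multiplicative.ofAdd (0, 1, 0))
    (hφ2 : φ (PresentedGroup.of 2) = Multiplicative.ofAdd (0, 0, 1))
    (hφ3 : φ (PresentedGroup.of 3) = Multiplicative.ofAdd (1, 0, 0))
    (hφ4 : φ (PresentedGroup.of 4) = Multiplicative.ofAdd (0, 1, 1))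
    (hψ0 : ψ (PresentedGroup.of 0) = Multiplicative.ofAdd (1, 1, 0))
    (hψ1 : ψ (PresentedGroup.of 1) = Multiplicative.ofAdd (1, 0, 1))
    (hψ2 : ψ (PresentedGroup.of 2) = Multiplicative.ofAdd (1, 1, 1))
    (hψ3 : ψ (PresentedGroup.of 3) = Multiplicative.ofAdd (1, 1, 0))
    (hψ4 : ψ (PresentedGroup.of 4) = Multiplicative.ofAdd (1, 0, 1))
    (hψ5 : ψ (PresentedGroup.of 5) = Multiplicative.ofAdd (1, 1, 1)) :
    Nonempty
      ((Subgroup.map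
          (QuotientGroup.mk'
            ⁅MonoidHom.ker
                (φ.comp (MonoidHom.fst (PresentedGroup bcRels₁) (PresentedGroup bcRels₂)) /
                  ψ.comp (MonoidHom.snd (PresentedGroup bcRels₁) (PresentedGroup bcRels₂))),
              MonoidHom.ker
                (φ.comp (MonoidHom.fst (PresentedGroup bcRels₁) (PresentedGroup bcRels₂)) /
                  ψ.comp (MonoidHom.snd (PresentedGroup bcRels₁) (PresentedGroup bcRels₂)))⁆)
          ⁅(⊤ : Subgroup (PresentedGroup bcRels₁ × PresentedGroup bcRels₂)),
            (⊤ : Subgroup (PresentedGroup bcRels₁ × PresentedGroup bcRels₂))⁆) ≃*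
        Multiplicative (ZMod 2 × ZMod 2)) := by
  obtain rfl : φ = φ₀ := PresentedGroup.ext fun i => by
    fin_cases i <;> simp [φ₀_of, φVal, *]
  obtain rfl : ψ = ψ₀ := PresentedGroup.ext fun j => by
    fin_cases j <;> simp [ψ₀_of, ψVal, *]
  have hV : Subgroup.map (QuotientGroup.mk' ⁅fiberProduct φ₀ ψ₀, fiberProduct φ₀ ψ₀⁆)
      ⁅(⊤ : Subgroup (PresentedGroup bcRels₁ × PresentedGroup bcRels₂)), ⊤⁆ = ξ.range := by
    rw [range_ξ, Subgroup.map_commutator,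
      map_top_of_surjective _ (QuotientGroup.mk'_surjective _), _root_.commutator_def]
  exact ⟨(MulEquiv.subgroupCongr hV).trans (MonoidHom.ofInjective ξ_injective).symm⟩
end
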